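/- The set {x^i f_k(x,y,z) : i, k ≥ 0} ∪ {x^j (y^l - Σ_{s=0}^{l} binom(l,s) x^s) f_{md-1}(x,y,z) : j ≥ 0, l ≥ 1, m ≥ 1} is a ℤ-basis of ℤ[x,y,z]. -/

import Mathlib

/-- The polynomials f_k(x,y,z) ∈ ℤ[x,y,z] (x = X 0, y = X 1, z = X 2) of
Definition 3.19, depending on d: f_0 = 1, f_1 = y, f_d = z,
f_{md+l} = y·f_{md+l-1} - x·f_{md+l-2} for m ≥ 0 and 1 ≤ l ≤ d-1, and
f_{(m+1)d} = z·f_{md} - x·f_{(m+1)d-2} - Σ_{i=2}^{d-1} x^i·f_{md-1} - x^d·f_{(m-1)d}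
for m ≥ 1. -/
noncomputable def f3 (d : ℕ) : ℕ → MvPolynomial (Fin 3) ℤ
  | 0 => 1
  | 1 => MvPolynomial.X 1
  | k + 2 =>
    if _h : (k + 2) % d = 0 then
      if k + 2 = d then MvPolynomial.X 2
      else
        MvPolynomial.X 2 * f3 d (k + 2 - d) - MvPolynomial.X 0 * f3 d k
          - (∑ i ∈ Finset.Icc 2 (d - 1), MvPolynomial.X 0 ^ i * f3 d (k + 2 - d - 1))
          - MvPolynomial.X 0 ^ d * f3 d (k + 2 - 2 * d)
    else MvPolynomial.X 1 * f3 d (k + 1) - MvPolynomial.X 0 * f3 d k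
  termination_by k => k
  decreasing_by
    all_goals
      first
        | omega
        | (have hd : d ≠ 0 := by rintro rfl; omega
           omega)

open MvPolynomial Finset

/-- The combined family of STATEMENT 9: the first component indexes
x^i f_k (i, k ≥ 0); the second indexes
x^j (y^l - Σ_{s=0}^{l} binom(l,s) x^s) f_{md-1} with j ≥ 0, l ≥ 1, m ≥ 1
(encoded as l = p.2.1 + 1, m = p.2.2 + 1). -/
noncomputable def famNine (d : ℕ) : (ℕ × ℕ) ⊕ (ℕ × ℕ × ℕ) → MvPolynomial (Fin 3) ℤ
  | Sum.inl p => X 0 ^ p.1 * f3 d p.2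
  | Sum.inr p =>
      X 0 ^ p.1 *
        (X 1 ^ (p.2.1 + 1) -
          ∑ s ∈ Finset.range (p.2.1 + 2), (C ((p.2.1 + 1).choose s : ℤ)) * X 0 ^ s) *
        f3 d ((p.2.2 + 1) * d - 1)

/-!
Give `x`, `y`, `z` the weights `0`, `1`, `d`. Induction along the recurrence shows that `f_k` is
`y ^ (k % d) * z ^ (k / d)` plus terms of weight `< k`, so every member of the family is a monomial
plus terms of strictly smaller weight. These leading monomials are `x^i y^a z^b` with `a < d` for
the first kind and `a ≥ d` for the second, so they run through every monomial exactly once; a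
family that is unitriangular in this sense with respect to a basis is itself a basis.
-/

open Submodule

section Unitriangular

variable {ι κ β R M : Type*} [Ring R] [AddCommGroup M] [Module R M]
  (b : Module.Basis κ R M) {w : κ → β} {v : ι → M} {μ : ι → κ}

theorem Module.Basis.repr_eq_single_of_sub_mem_span [Preorder β] {x : M} {j k : κ}
    (hx : x - b j ∈ span R (b '' {k | w k < w j})) (hk : ¬ w k < w j) :
    b.repr x k = Finsupp.single j 1 k := by
  have hk' : k ∉ (b.repr (x - b j)).support := fun h => hk (b.mem_span_image.1 hx h)
  rwa [Finsupp.notMem_support_iff, map_sub, b.repr_self, Finsupp.sub_apply, sub_eq_zero] at hk'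

theorem Module.Basis.linearIndependent_of_sub_mem_span_lt [LinearOrder β]
    (hμ : Function.Injective μ) (hv : ∀ i, v i - b (μ i) ∈ span R (b '' {k | w k < w (μ i)})) :
    LinearIndependent R v := by
  rw [linearIndependent_iff]
  intro l hl
  by_contra hne
  obtain ⟨i₀, hi₀, hmax⟩ :=
    l.support.exists_max_image (w ∘ μ) (Finsupp.support_nonempty_iff.2 hne)
  have hcoeff : b.repr (Finsupp.linearCombination R v l) (μ i₀) = l i₀ := by
    rw [Finsupp.linearCombination_apply, Finsupp.sum, map_sum, Finsupp.finsetSum_apply,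
      Finset.sum_eq_single i₀]
    · rw [map_smul, Finsupp.smul_apply,
        b.repr_eq_single_of_sub_mem_span (hv i₀) (lt_irrefl _), Finsupp.single_eq_same, smul_eq_mul,
        mul_one]
    · intro i hi hne
      rw [map_smul, Finsupp.smul_apply, b.repr_eq_single_of_sub_mem_span (hv i) (hmax i hi).not_gt,
        Finsupp.single_eq_of_ne (hμ.ne hne).symm, smul_zero]
    · exact fun h => (h hi₀).elim
  rw [hl, map_zero, Finsupp.zero_apply] at hcoeff
  exact Finsupp.mem_support_iff.1 hi₀ hcoeff.symm

theorem Module.Basis.span_eq_top_of_sub_mem_span_lt [Preorder β] [WellFoundedLT β]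
    (hμ : Function.Surjective μ) (hv : ∀ i, v i - b (μ i) ∈ span R (b '' {k | w k < w (μ i)})) :
    span R (Set.range v) = ⊤ := by
  have hb : ∀ c k, w k = c → b k ∈ span R (Set.range v) := by
    intro c
    induction c using WellFoundedLT.induction with
    | ind c ih =>
      rintro k rfl
      obtain ⟨i, rfl⟩ := hμ k
      have hlower : span R (b '' {k | w k < w (μ i)}) ≤ span R (Set.range v) :=
        span_le.2 <| Set.image_subset_iff.2 fun k hk => ih (w k) hk k rfl
      rw [← sub_sub_cancel (v i) (b (μ i))]
      exact sub_mem (subset_span ⟨i, rfl⟩) (hlower (hv i))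
  rw [eq_top_iff, ← b.span_eq, span_le]
  rintro _ ⟨k, rfl⟩
  exact hb _ k rfl

end Unitriangular

namespace MvPolynomial

variable {σ R : Type*} [CommRing R] (w : σ → ℕ)

noncomputable abbrev weightLT (n : ℕ) : Submodule R (MvPolynomial σ R) :=
  restrictSupport R {m | Finsupp.weight w m < n}

def HasLeadingMonomial (p : MvPolynomial σ R) (m : σ →₀ ℕ) : Prop :=
  p - monomial m 1 ∈ weightLT w (Finsupp.weight w m)

variable {w}

theorem weightLT_mono {n n' : ℕ} (h : n ≤ n') : weightLT (R := R) w n ≤ weightLT w n' :=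
  restrictSupport_mono R fun _ hm => lt_of_lt_of_le hm h

theorem IsWeightedHomogeneous.mul_mem_weightLT {p q : MvPolynomial σ R} {a n : ℕ}
    (hp : IsWeightedHomogeneous w p a) (hq : q ∈ weightLT w n) : p * q ∈ weightLT w (a + n) := by
  have hp' : p ∈ restrictSupport R {m | Finsupp.weight w m = a} :=
    fun _ hm => hp (mem_support_iff.1 hm)
  have hpq := Submodule.mul_mem_mul hp' hq
  rw [← restrictSupport_add] at hpq
  refine restrictSupport_mono R ?_ hpq
  rintro _ ⟨x, hx, y, hy, rfl⟩
  simp only [Set.mem_ofPred_eq, map_add] at hx hy ⊢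
  omega

theorem hasLeadingMonomial_monomial (m : σ →₀ ℕ) :
    HasLeadingMonomial w (monomial m (1 : R)) m := by
  simp [HasLeadingMonomial]

theorem HasLeadingMonomial.monomial_one_mul {p : MvPolynomial σ R} {m : σ →₀ ℕ}
    (hp : HasLeadingMonomial w p m) (a : σ →₀ ℕ) :
    HasLeadingMonomial w (monomial a 1 * p) (a + m) := by
  have h := (isWeightedHomogeneous_monomial w a (1 : R) rfl).mul_mem_weightLT hp
  rwa [mul_sub, MvPolynomial.monomial_mul, one_mul, ← map_add] at h

theorem HasLeadingMonomial.sub {p q : MvPolynomial σ R} {m : σ →₀ ℕ}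
    (hp : HasLeadingMonomial w p m) (hq : q ∈ weightLT w (Finsupp.weight w m)) :
    HasLeadingMonomial w (p - q) m := by
  rw [HasLeadingMonomial, sub_right_comm]
  exact sub_mem hp hq

theorem HasLeadingMonomial.mem_weightLT {p : MvPolynomial σ R} {m : σ →₀ ℕ}
    (hp : HasLeadingMonomial w p m) : p ∈ weightLT w (Finsupp.weight w m + 1) := by
  rw [← sub_add_cancel p (monomial m 1)]
  exact add_mem (weightLT_mono (Nat.le_succ _) hp) (by simp)

theorem HasLeadingMonomial.mul_mem_weightLT {p q : MvPolynomial σ R} {m : σ →₀ ℕ} {n : ℕ}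
    (hp : HasLeadingMonomial w p m) (hq : IsWeightedHomogeneous w q 0)
    (hn : Finsupp.weight w m < n) : q * p ∈ weightLT w n :=
  weightLT_mono (by omega) (hq.mul_mem_weightLT hp.mem_weightLT)

theorem linearIndependent_and_span_eq_top_of_hasLeadingMonomial {ι : Type*}
    {v : ι → MvPolynomial σ R} {μ : ι → σ →₀ ℕ} (hμ : Function.Bijective μ)
    (hv : ∀ i, HasLeadingMonomial w (v i) (μ i)) :
    LinearIndependent R v ∧ span R (Set.range v) = ⊤ := by
  have hv' : ∀ i, v i - basisMonomials σ R (μ i) ∈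
      span R (basisMonomials σ R '' {m | Finsupp.weight w m < Finsupp.weight w (μ i)}) := by
    intro i
    rw [coe_basisMonomials, ← restrictSupport_eq_span]
    exact hv i
  exact ⟨(basisMonomials σ R).linearIndependent_of_sub_mem_span_lt hμ.1 hv',
    (basisMonomials σ R).span_eq_top_of_sub_mem_span_lt hμ.2 hv'⟩

end MvPolynomial

section F3

variable {d : ℕ}

def f3Weight (d : ℕ) : Fin 3 → ℕ := ![0, 1, d]

noncomputable def f3LeadExp (d k : ℕ) : Fin 3 →₀ ℕ :=
  Finsupp.single 1 (k % d) + Finsupp.single 2 (k / d)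

theorem weight_f3LeadExp (k : ℕ) : Finsupp.weight (f3Weight d) (f3LeadExp d k) = k := by
  simp [f3LeadExp, f3Weight, Finsupp.weight_single, Nat.mod_add_div']

theorem f3_zero : f3 d 0 = 1 := by rw [f3]

theorem f3_one : f3 d 1 = X 1 := by rw [f3]

theorem f3_self (hd : 2 ≤ d) : f3 d d = X 2 := by
  obtain ⟨k, rfl⟩ := Nat.exists_eq_add_of_le' hd
  rw [f3, dif_pos (Nat.mod_self _), if_pos rfl]

theorem f3_add_two_of_not_dvd {k : ℕ} (h : ¬ d ∣ k + 2) :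
    f3 d (k + 2) = X 1 * f3 d (k + 1) - X 0 * f3 d k := by
  rw [f3, dif_neg (by rwa [← Nat.dvd_iff_mod_eq_zero])]

theorem f3_mul_add_two (hd : 2 ≤ d) (m : ℕ) :
    f3 d ((m + 2) * d) = X 2 * f3 d ((m + 1) * d) - X 0 * f3 d ((m + 2) * d - 2)
      - ∑ i ∈ Icc 2 (d - 1), X 0 ^ i * f3 d ((m + 1) * d - 1) - X 0 ^ d * f3 d (m * d) := by
  have hm2 : (m + 2) * d = (m + 1) * d + d := by ring
  have hm1 : (m + 1) * d = m * d + d := by ring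
  obtain ⟨k, hk⟩ : ∃ k, (m + 2) * d = k + 2 := ⟨(m + 2) * d - 2, by omega⟩
  rw [hk, f3, dif_pos (by rw [← hk, Nat.mul_mod_left]), if_neg (by omega)]
  rw [show k + 2 - d = (m + 1) * d by omega, show k + 2 - 2 = k by omega,
    show k + 2 - 2 * d = m * d by omega]

theorem f3LeadExp_mul (hd : 0 < d) (m : ℕ) : f3LeadExp d (m * d) = Finsupp.single 2 m := by
  simp [f3LeadExp, Nat.mul_div_cancel _ hd]

theorem f3LeadExp_add_two_of_not_dvd {k : ℕ} (h : ¬ d ∣ k + 2) :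
    f3LeadExp d (k + 2) = Finsupp.single 1 1 + f3LeadExp d (k + 1) := by
  have hdiv : (k + 2) / d = (k + 1) / d := by
    rw [Nat.succ_div, if_neg h, add_zero]
  have hmod : (k + 2) % d = (k + 1) % d + 1 := by
    have h1 := Nat.mod_add_div (k + 1) d
    have h2 := Nat.mod_add_div (k + 2) d
    rw [hdiv] at h2
    omega
  rw [f3LeadExp, f3LeadExp, hdiv, hmod, add_comm _ 1, Finsupp.single_add, add_assoc]

theorem f3LeadExp_mul_sub_one (hd : 0 < d) (m : ℕ) :
    f3LeadExp d ((m + 1) * d - 1) = Finsupp.single 1 (d - 1) + Finsupp.single 2 m := by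
  have hM : (m + 1) * d - 1 = d - 1 + d * m := by
    rw [add_mul, one_mul, mul_comm]; omega
  rw [f3LeadExp, hM, Nat.add_mul_mod_self_left, Nat.add_mul_div_left _ _ hd,
    Nat.mod_eq_of_lt (by omega), Nat.div_eq_of_lt (by omega), zero_add]

theorem isWeightedHomogeneous_X_zero_pow (i : ℕ) :
    IsWeightedHomogeneous (f3Weight d) (X 0 ^ i : MvPolynomial (Fin 3) ℤ) 0 := by
  simpa [f3Weight] using (isWeightedHomogeneous_X ℤ (f3Weight d) 0).pow i

theorem hasLeadingMonomial_f3 (hd : 2 ≤ d) (k : ℕ) :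
    HasLeadingMonomial (f3Weight d) (f3 d k) (f3LeadExp d k) := by
  induction k using Nat.strong_induction_on with
  | _ k ih =>
  -- Besides `y * f_(k-1)` resp. `z * f_(k-d)`, the recurrence only has terms `x ^ i * f_j`, `j < k`.
  have lower : ∀ j < k, ∀ i, X 0 ^ i * f3 d j ∈ weightLT (f3Weight d) k := fun j hj i =>
    (ih j hj).mul_mem_weightLT (isWeightedHomogeneous_X_zero_pow i) (by rwa [weight_f3LeadExp])
  rcases Nat.lt_or_ge k 2 with hk | hk
  · interval_cases k
    · simpa [f3_zero, f3LeadExp] using hasLeadingMonomial_monomial (R := ℤ) (w := f3Weight d) 0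
    · rw [f3_one, show f3LeadExp d 1 = Finsupp.single 1 1 by
        simp [f3LeadExp, Nat.mod_eq_of_lt hd, Nat.div_eq_of_lt hd]]
      exact hasLeadingMonomial_monomial _
  obtain ⟨j, rfl⟩ := Nat.exists_eq_add_of_le' hk
  by_cases h : d ∣ j + 2
  · obtain ⟨m, hm⟩ := h
    rcases m with _ | _ | m
    · omega
    · have hlead : f3LeadExp d d = Finsupp.single 2 1 := by
        simpa using f3LeadExp_mul (d := d) (by omega) 1
      rw [hm, zero_add, mul_one, f3_self hd, hlead]
      exact hasLeadingMonomial_monomial _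
    rw [show d * (m + 1 + 1) = (m + 2) * d by ring] at hm
    rw [hm] at ih lower ⊢
    have hlead : f3LeadExp d ((m + 2) * d) = Finsupp.single 2 1 + f3LeadExp d ((m + 1) * d) := by
      rw [f3LeadExp_mul (by omega), f3LeadExp_mul (by omega), ← Finsupp.single_add, add_comm 1]
    have hm2 : (m + 2) * d = (m + 1) * d + d := by ring
    have hm1 : (m + 1) * d = m * d + d := by ring
    rw [f3_mul_add_two hd, hlead]
    refine ((((ih _ (by omega)).monomial_one_mul (Finsupp.single 2 1)).sub ?_).sub ?_).sub ?_
      <;> rw [← hlead, weight_f3LeadExp]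
    · simpa using lower _ (by omega) 1
    · exact sum_mem fun i _ => lower _ (by omega) i
    · exact lower _ (by omega) d
  · rw [f3_add_two_of_not_dvd h, f3LeadExp_add_two_of_not_dvd h]
    refine ((ih _ (by omega)).monomial_one_mul (Finsupp.single 1 1)).sub ?_
    rw [← f3LeadExp_add_two_of_not_dvd h, weight_f3LeadExp]
    simpa using lower j (by omega) 1

end F3

section FamNine

variable {d : ℕ}

noncomputable def famNineLeadExp (d : ℕ) : (ℕ × ℕ) ⊕ (ℕ × ℕ × ℕ) → Fin 3 →₀ ℕ
  | Sum.inl (i, k) => Finsupp.single 0 i + f3LeadExp d k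
  | Sum.inr (j, l, m) =>
      Finsupp.single 0 j + Finsupp.single 1 (l + 1) + f3LeadExp d ((m + 1) * d - 1)

theorem hasLeadingMonomial_famNine (hd : 2 ≤ d) (idx : (ℕ × ℕ) ⊕ (ℕ × ℕ × ℕ)) :
    HasLeadingMonomial (f3Weight d) (famNine d idx) (famNineLeadExp d idx) := by
  rcases idx with ⟨i, k⟩ | ⟨j, l, m⟩
  · rw [famNine, famNineLeadExp, X_pow_eq_monomial]
    exact (hasLeadingMonomial_f3 hd k).monomial_one_mul _
  · set M := (m + 1) * d - 1
    have hx0 : IsWeightedHomogeneous (f3Weight d)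
        (X 0 ^ j * ∑ s ∈ range (l + 2), C ((l + 1).choose s : ℤ) * X 0 ^ s) 0 := by
      simpa only [add_zero] using (isWeightedHomogeneous_X_zero_pow j).mul
        (IsWeightedHomogeneous.sum _ _ _ fun s _ => (isWeightedHomogeneous_X_zero_pow s).C_mul _)
    have hsplit : famNine d (Sum.inr (j, l, m)) =
        monomial (Finsupp.single 0 j + Finsupp.single 1 (l + 1)) 1 * f3 d M
          - (X 0 ^ j * ∑ s ∈ range (l + 2), C ((l + 1).choose s : ℤ) * X 0 ^ s) * f3 d M := by
      rw [famNine, ← mul_one (1 : ℤ), ← monomial_mul, ← X_pow_eq_monomial, ← X_pow_eq_monomial]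
      ring
    rw [hsplit, famNineLeadExp]
    refine ((hasLeadingMonomial_f3 hd M).monomial_one_mul _).sub
      ((hasLeadingMonomial_f3 hd M).mul_mem_weightLT hx0 ?_)
    simp [f3Weight, Finsupp.weight_single]

theorem famNineLeadExp_inl (i k : ℕ) : famNineLeadExp d (.inl (i, k)) =
    Finsupp.single 0 i + Finsupp.single 1 (k % d) + Finsupp.single 2 (k / d) :=
  (add_assoc _ _ _).symm

theorem famNineLeadExp_inr (hd : 0 < d) (j l m : ℕ) : famNineLeadExp d (.inr (j, l, m)) =
    Finsupp.single 0 j + Finsupp.single 1 (l + d) + Finsupp.single 2 m := by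
  rw [famNineLeadExp, f3LeadExp_mul_sub_one hd, ← add_assoc, add_assoc (Finsupp.single 0 j),
    ← Finsupp.single_add, show l + 1 + (d - 1) = l + d by omega]

theorem famNineLeadExp_bijective (hd : 0 < d) : Function.Bijective (famNineLeadExp d) := by
  refine Function.bijective_iff_has_inverse.2
    ⟨fun e => if e 1 < d then .inl (e 0, e 1 + d * e 2) else .inr (e 0, e 1 - d, e 2), ?_, ?_⟩
  · rintro (⟨i, k⟩ | ⟨j, l, m⟩)
    · simp [famNineLeadExp_inl, Nat.mod_lt _ hd, Nat.mod_add_div]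
    · simp [famNineLeadExp_inr hd]
  · intro e
    dsimp only
    split_ifs with h
    · rw [famNineLeadExp_inl, Nat.add_mul_mod_self_left, Nat.add_mul_div_left _ _ hd,
        Nat.mod_eq_of_lt h, Nat.div_eq_of_lt h, zero_add]
      ext a
      fin_cases a <;> simp
    · rw [famNineLeadExp_inr hd, Nat.sub_add_cancel (not_lt.1 h)]
      ext a
      fin_cases a <;> simp

end FamNine

/-- {x^i f_k : i,k ≥ 0} ∪
{x^j (y^l - Σ_{s=0}^l binom(l,s) x^s) f_{md-1} : j ≥ 0, l,m ≥ 1} is a ℤ-basis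
of ℤ[x,y,z]. -/
theorem famNine_basis (d : ℕ) (hd : 2 ≤ d) :
    LinearIndependent ℤ (famNine d) ∧
    Submodule.span ℤ (Set.range (famNine d)) = ⊤ :=
  linearIndependent_and_span_eq_top_of_hasLeadingMonomial
    (famNineLeadExp_bijective (by omega)) (hasLeadingMonomial_famNine hd)
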